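/- For every n ≥ 1, the block length satisfies L_{n+1} = 3·L_n − 2·c_n, where L_n = |B_n| and c_n is the number of occurrences of the symbol 1 in B_n; equivalently, the sum of the entries of B_n equals L_{n+1}. -/

import Mathlib

/-- Generation operator: expand a run-length vector `R` starting with symbol `s`,
alternating between `s` and `4 - s` from run to run. -/
def G : List ℕ → ℕ → List ℕ
  | [], _ => []
  | r :: rs, s => List.replicate r s ++ G rs (4 - s)

/-- Pillar sequences: `P 1 = [3]`, `P (n+1) = G (P n) 3` for `n ≥ 1`. -/
def P : ℕ → List ℕ
  | 0 => []
  | 1 => [3]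
  | n + 2 => G (P (n + 1)) 3

/-- Block sequences: `B 1 = G [1,3,3,3,1] 1`, `B (n+1) = B n ++ P n ++ B n` for `n ≥ 1`. -/
def B : ℕ → List ℕ
  | 0 => []
  | 1 => G [1, 3, 3, 3, 1] 1
  | n + 2 => B (n + 1) ++ P (n + 1) ++ B (n + 1)

/-!
Since `G R s` has one symbol per unit of `R`, `|G R s| = ΣR`, so `|P (n+1)| = ΣP n`. Summing
`B (n+1) = B n ++ P n ++ B n` and using this, induction gives `Σ B n = |B (n+1)|`. As `B n` is a
word over `{1, 3}`, its sum is `3 L n - 2 c n`.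
-/

theorem length_G (R : List ℕ) (s : ℕ) : (G R s).length = R.sum := by
  induction R generalizing s with
  | nil => rfl
  | cons r rs ih => simp [G, ih]

theorem mem_G {R : List ℕ} {s x : ℕ} (hs : s ≤ 4) (hx : x ∈ G R s) : x = s ∨ x = 4 - s := by
  induction R generalizing s with
  | nil => simp [G] at hx
  | cons r rs ih =>
    simp only [G, List.mem_append, List.mem_replicate] at hx
    rcases hx with ⟨_, rfl⟩ | hx
    · exact .inl rfl
    · rcases ih (by omega) hx with h | h <;> omega

theorem mem_P {n x : ℕ} (hx : x ∈ P n) : x = 1 ∨ x = 3 := by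
  match n with
  | 0 => simp [P] at hx
  | 1 => simp [P] at hx; exact .inr hx
  | n + 2 => exact (mem_G (s := 3) (by norm_num) hx).symm

theorem mem_B {n x : ℕ} (hx : x ∈ B n) : x = 1 ∨ x = 3 := by
  induction n using Nat.twoStepInduction with
  | zero => simp [B] at hx
  | one => exact mem_G (by norm_num) hx
  | more n _ ih =>
    simp only [B, List.mem_append] at hx
    rcases hx with (hx | hx) | hx
    · exact ih hx
    · exact mem_P hx
    · exact ih hx

theorem sum_add_two_mul_count_one {l : List ℕ} (hl : ∀ x ∈ l, x = 1 ∨ x = 3) :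
    l.sum + 2 * l.count 1 = 3 * l.length := by
  induction l with
  | nil => rfl
  | cons a t ih =>
    have ht := ih fun x hx => hl x (List.mem_cons_of_mem a hx)
    rcases hl a List.mem_cons_self with rfl | rfl <;> simp <;> omega

theorem B_succ {n : ℕ} (hn : 1 ≤ n) : B (n + 1) = B n ++ P n ++ B n := by
  obtain ⟨m, rfl⟩ := Nat.exists_eq_add_of_le' hn
  rfl

theorem length_P_succ {n : ℕ} (hn : 1 ≤ n) : (P (n + 1)).length = (P n).sum := by
  obtain ⟨m, rfl⟩ := Nat.exists_eq_add_of_le' hn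
  exact length_G _ _

theorem length_B_succ {n : ℕ} (hn : 1 ≤ n) :
    (B (n + 1)).length = 2 * (B n).length + (P n).length := by
  rw [B_succ hn, List.length_append, List.length_append]
  omega

theorem sum_B_eq_length_B_succ {n : ℕ} (hn : 1 ≤ n) : (B n).sum = (B (n + 1)).length := by
  induction n, hn using Nat.le_induction with
  | base => rfl
  | succ n hn ih =>
    calc (B (n + 1)).sum = 2 * (B n).sum + (P n).sum := by
          rw [B_succ hn, List.sum_append, List.sum_append]
          omega
      _ = 2 * (B (n + 1)).length + (P (n + 1)).length := by rw [ih, length_P_succ hn]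
      _ = (B (n + 2)).length := (length_B_succ (by omega)).symm

/-- For every `n ≥ 1`, `L (n+1) = 3·L n − 2·c n` where `L n = |B n|` and `c n` counts
the `1`s in `B n`; equivalently, the sum of the entries of `B n` equals `L (n+1)`. -/
theorem block_length_recurrence :
    ∀ n : ℕ, 1 ≤ n →
      ((B (n + 1)).length : ℤ) = 3 * ((B n).length : ℤ) - 2 * ((B n).count 1 : ℤ) ∧
      (B n).sum = (B (n + 1)).length := by
  intro n hn
  have hsum := sum_B_eq_length_B_succ hn
  have hcount := sum_add_two_mul_count_one fun _ => mem_B (n := n)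
  refine ⟨?_, hsum⟩
  omega
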